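/- arXiv:1902.01253 — 5 statements merged into one kernel-verified Lean document; each statement's English description precedes it below -/
import Mathlib

section
/- Strong duality for conic programs: let E, F be finite-dimensional real inner product spaces, K ⊆ E a proper convex cone, A : E → F linear, c ∈ E, b ∈ F. Suppose there exists a strictly feasible primal point (x in the interior of K with Ax = b) and a strictly feasible dual point (y ∈ F with A†y − c in the interior of K*). Then p* = d*, and moreover both the primal conic program and the dual conic program possess optimal solutions: there exist a feasible x with ⟨c,x⟩ = p* and a feasible y with ⟨b,y⟩ = d*. -/
/-!
The strictly feasible dual point `y₀` makes the objective coercive on the primal feasible set: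
`⟪c, x⟫ ≤ ⟪b, y₀⟫ - ε ‖x‖`, so the primal optimum `p` is attained by compactness. For the dual,
separate `(b, p)` from the convex image of `interior K × (0, ∞)` under
`(x, s) ↦ (A x, ⟪c, x⟫ - s)`, which is open once `F` is replaced by the range of `A`. The
strictly feasible primal point forces the `ℝ`-component of the separating functional to be
positive; normalising it gives a Lagrange multiplier `y` with `⟪c, x⟫ - p ≤ ⟪y, A x - b⟫` on `K`,
which, `K` being a cone, is dual feasible with `⟪b, y⟫ ≤ p`. Weak duality closes the gap.
-/

open RealInnerProductSpace

/-- The dual cone of a set `K` in a real inner product space. -/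
def dualCone {E : Type*} [NormedAddCommGroup E] [InnerProductSpace ℝ E] (K : Set E) : Set E :=
  {y : E | ∀ x ∈ K, 0 ≤ ⟪x, y⟫}

open Filter Set

section ConicDuality

variable {E F : Type*} [NormedAddCommGroup E] [InnerProductSpace ℝ E]
  [NormedAddCommGroup F] [InnerProductSpace ℝ F]

lemma inner_adjoint_apply_sub [FiniteDimensional ℝ E] [FiniteDimensional ℝ F]
    (A : E →ₗ[ℝ] F) (x c : E) (y : F) :
    ⟪x, LinearMap.adjoint A y - c⟫ = ⟪A x, y⟫ - ⟪c, x⟫ := by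
  rw [inner_sub_right, LinearMap.adjoint_inner_right, real_inner_comm c]

theorem conic_weak_duality [FiniteDimensional ℝ E] [FiniteDimensional ℝ F] {K : Set E}
    {A : E →ₗ[ℝ] F} {c : E} {b : F} {x : E} {y : F} (hx : x ∈ K) (hAx : A x = b)
    (hy : LinearMap.adjoint A y - c ∈ dualCone K) : ⟪c, x⟫ ≤ ⟪b, y⟫ := by
  have := hy x hx
  rw [inner_adjoint_apply_sub, hAx, sub_nonneg] at this
  exact this

lemma exists_pos_mul_norm_le_inner_of_mem_interior_dualCone {K : Set E} {s : E}
    (hs : s ∈ interior (dualCone K)) : ∃ ε > 0, ∀ x ∈ K, ε * ‖x‖ ≤ ⟪x, s⟫ := by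
  obtain ⟨ε, hε, hball⟩ := Metric.mem_nhds_iff.1 (mem_interior_iff_mem_nhds.1 hs)
  refine ⟨ε / 2, half_pos hε, fun x hx => ?_⟩
  rcases eq_or_ne x 0 with rfl | hx0
  · simp
  have hxn : 0 < ‖x‖ := norm_pos_iff.2 hx0
  have hmem : s - (ε / 2 / ‖x‖) • x ∈ dualCone K := by
    refine hball ?_
    rw [mem_ball_iff_norm, sub_sub_cancel_left, norm_neg, norm_smul, Real.norm_eq_abs,
      abs_of_pos (by positivity), div_mul_cancel₀ _ hxn.ne']
    exact half_lt_self hε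
  have := hmem x hx
  rw [inner_sub_right, real_inner_smul_right, real_inner_self_eq_norm_sq, sub_nonneg] at this
  calc ε / 2 * ‖x‖ = ε / 2 / ‖x‖ * ‖x‖ ^ 2 := by field_simp
    _ ≤ ⟪x, s⟫ := this

theorem exists_primal_optimal [FiniteDimensional ℝ E] [FiniteDimensional ℝ F] {K : Set E}
    (hK : IsClosed K) {A : E →ₗ[ℝ] F} {c : E} {b : F} {y₀ : F}
    (hy₀ : LinearMap.adjoint A y₀ - c ∈ interior (dualCone K)) {x₀ : E} (hx₀ : x₀ ∈ K)
    (hAx₀ : A x₀ = b) : ∃ x ∈ K, A x = b ∧ ∀ x' ∈ K, A x' = b → ⟪c, x'⟫ ≤ ⟪c, x⟫ := by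
  obtain ⟨ε, hε, hcoer⟩ := exists_pos_mul_norm_le_inner_of_mem_interior_dualCone hy₀
  have hbound : ∀ x ∈ K, A x = b → ⟪c, x⟫ ≤ ⟪b, y₀⟫ - ε * ‖x‖ := fun x hx hAx => by
    have := hcoer x hx
    rw [inner_adjoint_apply_sub, hAx] at this
    linarith
  have hfeas : IsClosed (K ∩ {x | A x = b}) :=
    hK.inter (isClosed_eq A.continuous_of_finiteDimensional continuous_const)
  have hcoercive : ∀ᶠ x in cocompact E ⊓ 𝓟 (K ∩ {x | A x = b}), ⟪c, x⟫ ≤ ⟪c, x₀⟫ := by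
    filter_upwards [(tendsto_norm_cocompact_atTop.eventually_ge_atTop
        ((⟪b, y₀⟫ - ⟪c, x₀⟫) / ε)).filter_mono inf_le_left,
      mem_inf_of_right (mem_principal_self _)] with x hxR ⟨hx, hAx⟩
    rw [div_le_iff₀ hε] at hxR
    linarith [hbound x hx hAx]
  obtain ⟨x, ⟨hx, hAx⟩, hmax⟩ := (continuous_const.inner continuous_id).continuousOn.exists_isMaxOn'
    hfeas ⟨hx₀, hAx₀⟩ hcoercive
  exact ⟨x, hx, hAx, fun x' hx' hAx' => hmax ⟨hx', hAx'⟩⟩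

lemma ContinuousLinearMap.apply_prod_real (f : StrongDual ℝ (F × ℝ)) (w : F) (t : ℝ) :
    f (w, t) = f.comp (.inl ℝ F ℝ) w + t * f (0, 1) := by
  rw [← smul_eq_mul, ← map_smul, comp_apply, inl_apply, ← map_add, Prod.smul_mk, smul_zero,
    smul_eq_mul, mul_one, Prod.mk_add_mk, add_zero, zero_add]

theorem exists_lagrange_multiplier_of_surjective [CompleteSpace E] [CompleteSpace F] {K : Set E}
    (hK : Convex ℝ K) {A : E →L[ℝ] F} (hA : Function.Surjective A) {c : E} {b : F} {p : ℝ}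
    {x₀ : E} (hx₀ : x₀ ∈ interior K) (hAx₀ : A x₀ = b) (hp : ∀ x ∈ K, A x = b → ⟪c, x⟫ ≤ p) :
    ∃ y : F, ∀ x ∈ K, ⟪c, x⟫ - p ≤ ⟪y, A x - b⟫ := by
  set T : E × ℝ →L[ℝ] F × ℝ :=
    (A.comp (.fst ℝ E ℝ)).prod ((innerSL ℝ c).comp (.fst ℝ E ℝ) - .snd ℝ E ℝ)
  have hT : ∀ z, T z = (A z.1, ⟪c, z.1⟫ - z.2) := fun _ => rfl
  have hTsurj : Function.Surjective T := fun ⟨w, t⟩ => by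
    obtain ⟨x, rfl⟩ := hA w
    exact ⟨(x, ⟪c, x⟫ - t), by simp [hT]⟩
  have hbp : (b, p) ∉ T '' (interior K ×ˢ Ioi 0) := by
    rintro ⟨⟨x, s⟩, ⟨hx, hs⟩, hxs⟩
    simp only [hT, Prod.mk.injEq] at hxs
    linarith [hp x (interior_subset hx) hxs.1, mem_Ioi.1 hs]
  obtain ⟨f, hf⟩ := geometric_hahn_banach_open_point
    ((hK.interior.prod (convex_Ioi 0)).linear_image T.toLinearMap)
    (T.isOpenMap hTsurj _ (isOpen_interior.prod isOpen_Ioi)) hbp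
  set g : StrongDual ℝ F := f.comp (.inl ℝ F ℝ)
  set β := f (0, 1)
  have hf_apply : ∀ w t, f (w, t) = g w + t * β := f.apply_prod_real
  have hlt : ∀ x ∈ interior K, ∀ s > 0, g (A x) + (⟪c, x⟫ - s) * β < g b + p * β :=
    fun x hx s hs => by simpa only [hT, hf_apply] using hf (T (x, s)) ⟨(x, s), ⟨hx, hs⟩, rfl⟩
  have hβ : 0 < β := by
    have := hlt x₀ hx₀ (|⟪c, x₀⟫ - p| + 1) (by positivity)
    rw [hAx₀] at this
    refine pos_of_mul_neg_right (a := ⟪c, x₀⟫ - p - (|⟪c, x₀⟫ - p| + 1)) (by linarith) ?_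
    linarith [le_abs_self (⟪c, x₀⟫ - p)]
  have hle : ∀ x ∈ K, g (A x) + ⟪c, x⟫ * β ≤ g b + p * β := by
    intro x hx
    have hcl : (x, (0 : ℝ)) ∈ closure (interior K ×ˢ Ioi 0) := by
      rw [closure_prod_eq, closure_Ioi, hK.closure_interior_eq_closure_of_nonempty_interior
        ⟨x₀, hx₀⟩]
      exact ⟨subset_closure hx, self_mem_Ici⟩
    have : f (T (x, 0)) ≤ f (b, p) := closure_minimal (s := interior K ×ˢ Ioi 0)
      (fun z hz => (hf (T z) (mem_image_of_mem T hz)).le)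
      (isClosed_le (f.continuous.comp T.continuous) continuous_const) hcl
    simpa only [hT, hf_apply, sub_zero] using this
  refine ⟨-β⁻¹ • (InnerProductSpace.toDual ℝ F).symm g, fun x hx => ?_⟩
  rw [real_inner_smul_left, InnerProductSpace.toDual_symm_apply, map_sub, neg_mul, ← mul_neg,
    neg_sub, le_inv_mul_iff₀ hβ]
  linarith [hle x hx]

theorem exists_lagrange_multiplier [FiniteDimensional ℝ E] {K : Set E} (hK : Convex ℝ K)
    {A : E →ₗ[ℝ] F} {c : E} {b : F} {p : ℝ} {x₀ : E} (hx₀ : x₀ ∈ interior K) (hAx₀ : A x₀ = b)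
    (hp : ∀ x ∈ K, A x = b → ⟪c, x⟫ ≤ p) : ∃ y : F, ∀ x ∈ K, ⟪c, x⟫ - p ≤ ⟪y, A x - b⟫ := by
  obtain ⟨y, hy⟩ := exists_lagrange_multiplier_of_surjective
    (A := LinearMap.toContinuousLinearMap A.rangeRestrict) (b := ⟨b, x₀, hAx₀⟩) hK
    A.surjective_rangeRestrict hx₀ (Subtype.ext hAx₀)
    fun x hx hAx => hp x hx (congrArg Subtype.val hAx)
  exact ⟨y, fun x hx => (hy x hx).trans_eq (Submodule.coe_inner _ _ _)⟩

lemma mem_dualCone_of_forall_le_inner {K : Set E} (hK : ∀ x ∈ K, ∀ t : ℝ, 0 < t → t • x ∈ K)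
    {z : E} {r : ℝ} (h : ∀ x ∈ K, r ≤ ⟪x, z⟫) : z ∈ dualCone K := by
  intro x hx
  by_contra! hneg
  have ht : (|r| + 1) / -⟪x, z⟫ * ⟪x, z⟫ = -(|r| + 1) := by
    rw [div_neg, neg_mul, div_mul_cancel₀ _ hneg.ne]
  have := h _ (hK x hx ((|r| + 1) / -⟪x, z⟫) (div_pos (by positivity) (neg_pos.2 hneg)))
  rw [real_inner_smul_left, ht] at this
  linarith [neg_abs_le r]

theorem exists_dual_feasible_inner_le [FiniteDimensional ℝ E] [FiniteDimensional ℝ F]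
    {K : Set E} (hK : ∀ x ∈ K, ∀ y ∈ K, ∀ a b : ℝ, 0 ≤ a → 0 ≤ b → a • x + b • y ∈ K)
    {A : E →ₗ[ℝ] F} {c : E} {b : F} {p : ℝ} {x₀ : E} (hx₀ : x₀ ∈ interior K) (hAx₀ : A x₀ = b)
    (hp : ∀ x ∈ K, A x = b → ⟪c, x⟫ ≤ p) :
    ∃ y : F, LinearMap.adjoint A y - c ∈ dualCone K ∧ ⟪b, y⟫ ≤ p := by
  have hsmul : ∀ x ∈ K, ∀ t : ℝ, 0 ≤ t → t • x ∈ K := fun x hx t ht => by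
    simpa using hK x hx x hx t 0 ht le_rfl
  obtain ⟨y, hy⟩ := exists_lagrange_multiplier
    (fun x hx x' hx' a a' ha ha' _ => hK x hx x' hx' a a' ha ha') hx₀ hAx₀ hp
  have hLagrange : ∀ x ∈ K, ⟪b, y⟫ - p ≤ ⟪x, LinearMap.adjoint A y - c⟫ := fun x hx => by
    rw [inner_adjoint_apply_sub]
    linarith [hy x hx, inner_sub_right (𝕜 := ℝ) y (A x) b, real_inner_comm y (A x),
      real_inner_comm y b]
  refine ⟨y, mem_dualCone_of_forall_le_inner (fun x hx t ht => hsmul x hx t ht.le) hLagrange, ?_⟩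
  have := hLagrange 0 (by simpa using hsmul x₀ (interior_subset hx₀) 0 le_rfl)
  rw [inner_zero_left, sub_nonpos] at this
  exact this

end ConicDuality

theorem conic_strong_duality_general
    {E F : Type*} [NormedAddCommGroup E] [InnerProductSpace ℝ E] [FiniteDimensional ℝ E]
    [NormedAddCommGroup F] [InnerProductSpace ℝ F] [FiniteDimensional ℝ F]
    (K : Set E)
    (hKcone : ∀ x ∈ K, ∀ y ∈ K, ∀ a b : ℝ, 0 ≤ a → 0 ≤ b → a • x + b • y ∈ K)
    (hKclosed : IsClosed K)
    (A : E →ₗ[ℝ] F) (c : E) (b : F)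
    (hprimal : ∃ x : E, x ∈ interior K ∧ A x = b)
    (hdual : ∃ y : F, (LinearMap.adjoint A) y - c ∈ interior (dualCone K)) :
    ∃ v : ℝ,
      IsLUB {r : ℝ | ∃ x : E, x ∈ K ∧ A x = b ∧ r = ⟪c, x⟫} v ∧
      IsGLB {r : ℝ | ∃ y : F, (LinearMap.adjoint A) y - c ∈ dualCone K ∧ r = ⟪b, y⟫} v ∧
      (∃ x : E, x ∈ K ∧ A x = b ∧ ⟪c, x⟫ = v) ∧
      (∃ y : F, (LinearMap.adjoint A) y - c ∈ dualCone K ∧ ⟪b, y⟫ = v) := by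
  obtain ⟨x₀, hx₀, hAx₀⟩ := hprimal
  obtain ⟨y₀, hy₀⟩ := hdual
  obtain ⟨x, hx, hAx, hmax⟩ := exists_primal_optimal hKclosed hy₀ (interior_subset hx₀) hAx₀
  obtain ⟨y, hy, hyx⟩ := exists_dual_feasible_inner_le hKcone hx₀ hAx₀ hmax
  have hval : ⟪b, y⟫ = ⟪c, x⟫ := hyx.antisymm (conic_weak_duality hx hAx hy)
  refine ⟨⟪c, x⟫, IsGreatest.isLUB ⟨⟨x, hx, hAx, rfl⟩, ?_⟩,
    IsLeast.isGLB ⟨⟨y, hy, hval.symm⟩, ?_⟩, ⟨x, hx, hAx, rfl⟩, ⟨y, hy, hval⟩⟩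
  · rintro _ ⟨x', hx', hAx', rfl⟩
    exact hmax x' hx' hAx'
  · rintro _ ⟨y', hy', rfl⟩
    exact conic_weak_duality hx hAx hy'

/-- **Strong duality for conic programs.** If both the primal and the dual conic program have
strictly feasible solutions, then the primal and dual optimal values coincide and both programs
possess optimal solutions: there is a common value `v` which is the supremum of the primal
objective values, the infimum of the dual objective values, and which is attained by a primal
feasible point and by a dual feasible point. -/
theorem conic_strong_duality
    {E F : Type*} [NormedAddCommGroup E] [InnerProductSpace ℝ E] [FiniteDimensional ℝ E]
    [NormedAddCommGroup F] [InnerProductSpace ℝ F] [FiniteDimensional ℝ F]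
    (K : Set E)
    (hKcone : ∀ x ∈ K, ∀ y ∈ K, ∀ a b : ℝ, 0 ≤ a → 0 ≤ b → a • x + b • y ∈ K)
    (hKclosed : IsClosed K)
    (hKpointed : K ∩ (-K) = {0})
    (hKfull : (interior K).Nonempty)
    (A : E →ₗ[ℝ] F) (c : E) (b : F)
    (hprimal : ∃ x : E, x ∈ interior K ∧ A x = b)
    (hdual : ∃ y : F, (LinearMap.adjoint A) y - c ∈ interior (dualCone K)) :
    ∃ v : ℝ,
      IsLUB {r : ℝ | ∃ x : E, x ∈ K ∧ A x = b ∧ r = ⟪c, x⟫} v ∧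
      IsGLB {r : ℝ | ∃ y : F, (LinearMap.adjoint A) y - c ∈ dualCone K ∧ r = ⟪b, y⟫} v ∧
      (∃ x : E, x ∈ K ∧ A x = b ∧ ⟪c, x⟫ = v) ∧
      (∃ y : F, (LinearMap.adjoint A) y - c ∈ dualCone K ∧ ⟪b, y⟫ = v) :=
  conic_strong_duality_general K hKcone hKclosed A c b hprimal hdual
end

section
/- Exactness of the Lasserre hierarchy: for every finite simple graph G = (V, E) with n vertices and every integer t with α(G) ≤ t ≤ n, the Lasserre bound of order t is exact, that is, las_t(G) = α(G). -/
/-- The (combinatorial) moment matrix of order `t` of a vector `y` indexed by subsets of `V`: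
rows and columns are indexed by the subsets of `V` of cardinality at most `t`, and the
`(I, J)` entry is `y (I ∪ J)`. -/
def momentMatrix {V : Type*} [DecidableEq V] (t : ℕ) (y : Finset V → ℝ) :
    Matrix {J : Finset V // J.card ≤ t} {J : Finset V // J.card ≤ t} ℝ :=
  fun I J => y (I.1 ∪ J.1)

/-- Feasibility for the semidefinite program defining the Lasserre bound of `G` of order `t`:
`y` is entrywise nonnegative on subsets of cardinality at most `2t`, normalized by `y ∅ = 1`,
vanishes on edges, and has a positive semidefinite moment matrix of order `t`. -/
def LasserreFeasible {V : Type*} [DecidableEq V] [Fintype V] (G : SimpleGraph V) (t : ℕ)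
    (y : Finset V → ℝ) : Prop :=
  (∀ J : Finset V, J.card ≤ 2 * t → 0 ≤ y J) ∧
  y ∅ = 1 ∧
  (∀ i j : V, G.Adj i j → y {i, j} = 0) ∧
  (momentMatrix t y).PosSemidef

/-- The Lasserre bound of `G` of order `t`. -/
noncomputable def lasserreBound {V : Type*} [DecidableEq V] [Fintype V]
    (G : SimpleGraph V) (t : ℕ) : ℝ :=
  sSup {r : ℝ | ∃ y : Finset V → ℝ, LasserreFeasible G t y ∧ r = ∑ i : V, y {i}}

/-- A set of vertices is independent if no two of its elements are adjacent. -/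
def IsIndepSet {V : Type*} (G : SimpleGraph V) (I : Finset V) : Prop :=
  ∀ i ∈ I, ∀ j ∈ I, ¬ G.Adj i j

/-- The independence number `α(G)` of a finite graph `G`. -/
noncomputable def indepNum {V : Type*} [Fintype V] (G : SimpleGraph V) : ℕ :=
  sSup {k : ℕ | ∃ I : Finset V, IsIndepSet G I ∧ I.card = k}

/-- The characteristic vector `χ^I` of `I ⊆ V`, indexed by subsets of `V`:
`χ^I_J = 1` if `J ⊆ I` and `χ^I_J = 0` otherwise. -/
def charVec {V : Type*} [DecidableEq V] (I : Finset V) : Finset V → ℝ :=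
  fun J => if J ⊆ I then 1 else 0

/-!
Positive semidefiniteness propagates the zeros of a feasible `y` on edges: a zero diagonal entry
of `M_t(y)` kills its whole row, so `y` vanishes on every dependent set of size at most `2t`.
Hence `M_t(y) = M_t(z)`, where `z` is `y` restricted to independent sets, all of which have size
at most `α(G) ≤ t`. Möbius inversion over the subset lattice writes `z = ∑_K λ_K χ^K`, so
`M_t(z) = ∑_K λ_K χ^K (χ^K)ᵀ`, and testing this against the alternating vector
`A ↦ (-1)^(|A| - |S|) [S ⊆ A]` returns `λ_S`, which is therefore nonnegative. Thus `z` is a conic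
combination of characteristic vectors of independent sets of total weight `y_∅ = 1`, and
`∑_i y_i = ∑_K λ_K |K| ≤ α(G)`; the vector `χ^I` of a maximum independent set `I` attains this.
-/

open Finset Matrix

namespace Finset

variable {α R : Type*} [DecidableEq α] [CommRing R]

theorem sum_Icc_neg_one_pow_card (s t : Finset α) :
    ∑ u ∈ Icc s t, (-1 : R) ^ #u = if s = t then (-1) ^ #s else 0 := by
  by_cases hst : s ⊆ t
  · have hdisj : ∀ u ∈ (t \ s).powerset, Disjoint s u := fun u hu =>
      disjoint_of_subset_right (mem_powerset.1 hu) disjoint_sdiff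
    rw [Icc_eq_image_powerset hst, sum_image fun u hu v hv huv => by
      rw [← union_sdiff_cancel_left (hdisj u hu), huv, union_sdiff_cancel_left (hdisj v hv)]]
    rw [sum_congr rfl fun u hu => by rw [card_union_of_disjoint (hdisj u hu), pow_add], ← mul_sum]
    have hsign : ∑ u ∈ (t \ s).powerset, (-1 : R) ^ #u = if t ⊆ s then 1 else 0 := by
      simpa [sdiff_eq_empty_iff_subset] using
        congrArg (Int.cast : ℤ → R) (sum_powerset_neg_one_pow_card (x := t \ s))
    rw [hsign]
    by_cases hts : t ⊆ s
    · rw [if_pos hts, if_pos (hst.antisymm hts), mul_one]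
    · rw [if_neg hts, if_neg fun h => hts h.ge, mul_zero]
  · rw [Icc_eq_empty fun h => hst h, sum_empty, if_neg fun h => hst h.le]

end Finset

namespace Matrix.PosSemidef

open scoped ComplexOrder

variable {𝕜 n : Type*} [RCLike 𝕜] [Fintype n] [DecidableEq n]

theorem apply_eq_zero_of_diag_eq_zero {A : Matrix n n 𝕜} (hA : A.PosSemidef) {a : n}
    (ha : A a a = 0) (b : n) : A b a = 0 := by
  have hcol := (hA.dotProduct_mulVec_zero_iff (Pi.single a 1)).1 (by simpa using ha)
  simpa using congrFun hcol b

end Matrix.PosSemidef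

section Mobius

variable {V : Type*} [DecidableEq V]

theorem momentMatrix_charVec (t : ℕ) (I : Finset V) :
    momentMatrix t (charVec I) = vecMulVec (fun A => charVec I A.1) (fun A => charVec I A.1) := by
  ext A B
  simp only [momentMatrix, vecMulVec_apply, charVec, union_subset_iff]
  split_ifs <;> simp_all

variable [Fintype V]

theorem sum_charVec_singleton (I : Finset V) : ∑ i, charVec I {i} = #I := by
  simp [charVec]

def mobius (z : Finset V → ℝ) (S : Finset V) : ℝ :=
  ∑ K with S ⊆ K, (-1) ^ (#S + #K) * z K

theorem mobius_eq_zero_of_superset {z : Finset V → ℝ} {S : Finset V}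
    (h : ∀ K, S ⊆ K → z K = 0) : mobius z S = 0 :=
  sum_eq_zero fun K hK => by rw [h K (mem_filter.1 hK).2, mul_zero]

theorem sum_mobius_smul_charVec (z : Finset V → ℝ) : ∑ K, mobius z K • charVec K = z := by
  funext A
  simp only [Finset.sum_apply, Pi.smul_apply, smul_eq_mul, charVec, mul_ite, mul_one, mul_zero,
    ← sum_filter, mobius]
  rw [sum_comm' (t' := {L | A ⊆ L}) (s' := fun L => Icc A L) fun K L => by
    simp only [mem_filter, mem_univ, true_and, mem_Icc]
    exact ⟨fun h => ⟨h, h.1.trans h.2⟩, fun h => h.1⟩]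
  simp_rw [pow_add, ← sum_mul, sum_Icc_neg_one_pow_card, ite_mul, zero_mul]
  rw [sum_ite_eq, if_pos (mem_filter.2 ⟨mem_univ _, subset_rfl⟩), ← pow_add,
    ← two_mul, pow_mul, neg_one_sq, one_pow, one_mul]

theorem sum_mobius (z : Finset V → ℝ) : ∑ K, mobius z K = z ∅ := by
  conv_rhs => rw [← sum_mobius_smul_charVec z]
  simp [charVec]

theorem sum_mobius_mul_card (z : Finset V → ℝ) : ∑ K, mobius z K * #K = ∑ i, z {i} := by
  conv_rhs => rw [← sum_mobius_smul_charVec z]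
  simp only [Finset.sum_apply, Pi.smul_apply, smul_eq_mul]
  rw [sum_comm]
  simp only [← mul_sum, sum_charVec_singleton]

theorem momentMatrix_eq_sum_mobius (t : ℕ) (z : Finset V → ℝ) :
    momentMatrix t z = ∑ K, mobius z K • momentMatrix t (charVec K) := by
  conv_lhs => rw [← sum_mobius_smul_charVec z]
  ext A B
  simp [momentMatrix, Matrix.sum_apply, Finset.sum_apply]

theorem sum_charVec_mul_alternating {t : ℕ} {K : Finset V} (hK : #K ≤ t) (S : Finset V) :
    ∑ A : {A : Finset V // #A ≤ t},
        charVec K A.1 * (if S ⊆ A.1 then (-1 : ℝ) ^ (#S + #A.1) else 0) =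
      if S = K then 1 else 0 := by
  rw [← sum_subtype {A | #A ≤ t} (by simp)
    (fun A => charVec K A * (if S ⊆ A then (-1 : ℝ) ^ (#S + #A) else 0))]
  rw [sum_filter_of_ne fun A _ hA => by
    simp only [charVec, ne_eq, ite_mul, one_mul, zero_mul, ite_eq_right_iff, not_forall] at hA
    exact (card_le_card hA.1).trans hK]
  have hterm : ∀ A, charVec K A * (if S ⊆ A then (-1 : ℝ) ^ (#S + #A) else 0) =
      if A ∈ Icc S K then (-1) ^ #S * (-1) ^ #A else 0 := by
    intro A
    simp only [charVec, mem_Icc, pow_add]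
    split_ifs <;> simp_all
  simp_rw [hterm, sum_ite_mem, univ_inter, ← mul_sum, sum_Icc_neg_one_pow_card, mul_ite, mul_zero,
    ← pow_add, ← two_mul, pow_mul, neg_one_sq, one_pow]

theorem mobius_nonneg {t : ℕ} {z : Finset V → ℝ} (hsupp : ∀ K, t < #K → z K = 0)
    (hz : (momentMatrix t z).PosSemidef) (S : Finset V) : 0 ≤ mobius z S := by
  have hsmall : ∀ K, t < #K → mobius z K = 0 := fun K hK =>
    mobius_eq_zero_of_superset fun L hL => hsupp L (hK.trans_le (card_le_card hL))
  rcases lt_or_ge t #S with hS | hS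
  · exact (hsmall S hS).ge
  set w : {A : Finset V // #A ≤ t} → ℝ := fun A => if S ⊆ A.1 then (-1) ^ (#S + #A.1) else 0
  calc 0 ≤ star w ⬝ᵥ (momentMatrix t z *ᵥ w) := hz.dotProduct_mulVec_nonneg w
    _ = ∑ K, mobius z K * ((fun A => charVec K A.1) ⬝ᵥ w) ^ 2 := by
      simp only [momentMatrix_eq_sum_mobius t z, sum_mulVec, dotProduct_sum, momentMatrix_charVec,
        smul_mulVec, vecMulVec_mulVec, dotProduct_smul, star_trivial]
      exact sum_congr rfl fun K _ => by
        rw [op_smul_eq_smul, smul_eq_mul, smul_eq_mul, dotProduct_comm w, sq]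
    _ = mobius z S := by
      refine (sum_eq_single S (fun K _ hKS => ?_) (by simp)).trans ?_
      · rcases lt_or_ge t #K with hK | hK
        · rw [hsmall K hK, zero_mul]
        · rw [dotProduct, sum_charVec_mul_alternating hK, if_neg fun h => hKS h.symm]
          ring
      · rw [dotProduct, sum_charVec_mul_alternating hS, if_pos rfl]
        ring

end Mobius

section Graph

variable {V : Type*} {G : SimpleGraph V}

theorem IsIndepSet.mono {I J : Finset V} (hJ : IsIndepSet G J) (h : I ⊆ J) : IsIndepSet G I :=
  fun i hi j hj => hJ i (h hi) j (h hj)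

theorem isIndepSet_empty : IsIndepSet G ∅ := by
  simp [IsIndepSet]

theorem isIndepSet_singleton (i : V) : IsIndepSet G {i} := by
  simp [IsIndepSet]

theorem exists_adj_of_not_isIndepSet {K : Finset V} (hK : ¬ IsIndepSet G K) :
    ∃ i ∈ K, ∃ j ∈ K, G.Adj i j := by
  simpa [IsIndepSet] using hK

variable [Fintype V]

theorem bddAbove_indepSet_card (G : SimpleGraph V) :
    BddAbove {k | ∃ I : Finset V, IsIndepSet G I ∧ #I = k} :=
  ⟨Fintype.card V, by rintro k ⟨I, -, rfl⟩; exact card_le_univ I⟩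

theorem IsIndepSet.card_le_indepNum {I : Finset V} (hI : IsIndepSet G I) : #I ≤ indepNum G :=
  le_csSup (bddAbove_indepSet_card G) ⟨I, hI, rfl⟩

theorem exists_isIndepSet_card_eq_indepNum (G : SimpleGraph V) :
    ∃ I : Finset V, IsIndepSet G I ∧ #I = indepNum G :=
  Nat.sSup_mem (s := {k | ∃ I : Finset V, IsIndepSet G I ∧ #I = k})
    ⟨0, ∅, isIndepSet_empty, card_empty⟩ (bddAbove_indepSet_card G)

end Graph

section Lasserre

variable {V : Type*} [DecidableEq V] [Fintype V] {G : SimpleGraph V} {t : ℕ}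

theorem IsIndepSet.lasserreFeasible_charVec {I : Finset V} (hI : IsIndepSet G I) (t : ℕ) :
    LasserreFeasible G t (charVec I) := by
  refine ⟨fun J _ => ?_, if_pos (empty_subset I), fun i j hij => if_neg fun h => ?_, ?_⟩
  · unfold charVec; split_ifs <;> norm_num
  · exact hI i (h (mem_insert_self i {j})) j (h (mem_insert_of_mem (mem_singleton_self j))) hij
  · rw [momentMatrix_charVec]
    simpa using posSemidef_vecMulVec_self_star (fun A : {A : Finset V // #A ≤ t} => charVec I A.1)

theorem moment_eq_zero_of_superset {y : Finset V → ℝ} (hy : (momentMatrix t y).PosSemidef)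
    {D K : Finset V} (hD : #D ≤ t) (hyD : y D = 0) (hDK : D ⊆ K) (hK : #K ≤ 2 * t) :
    y K = 0 := by
  have hunion : ∀ {A B : Finset V}, #A ≤ t → #B ≤ t → y A = 0 → y (A ∪ B) = 0 :=
    fun {A B} hA hB h => by
      simpa [momentMatrix, union_comm] using
        hy.apply_eq_zero_of_diag_eq_zero (a := ⟨A, hA⟩) (by simpa [momentMatrix] using h)
          ⟨B, hB⟩
  -- Grow `D` inside `K` to a row index `A` with `y A = 0` and `#(K \ A) ≤ t`.
  obtain ⟨A, hDA, hAK, hA⟩ := exists_subsuperset_card_eq hDK (le_min hD (card_le_card hDK))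
    (min_le_right t #K)
  have hAt : #A ≤ t := hA ▸ min_le_left t #K
  have hyA : y A = 0 := by simpa [union_eq_right.2 hDA] using hunion hD hAt hyD
  have hKA : #(K \ A) ≤ t := by rw [card_sdiff_of_subset hAK, hA]; omega
  simpa [union_sdiff_of_subset hAK] using hunion hAt hKA hyA

theorem LasserreFeasible.eq_zero_of_not_isIndepSet {y : Finset V → ℝ}
    (hy : LasserreFeasible G t y) {K : Finset V} (hK : #K ≤ 2 * t) (hKG : ¬ IsIndepSet G K) :
    y K = 0 := by
  obtain ⟨-, -, hedge, hM⟩ := hy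
  obtain ⟨i, hi, j, hj, hij⟩ := exists_adj_of_not_isIndepSet hKG
  have hsub : {i, j} ⊆ K := insert_subset hi (singleton_subset_iff.2 hj)
  have hcard : #{i, j} = 2 := card_pair hij.ne
  rcases le_or_gt 2 t with ht | ht
  · exact moment_eq_zero_of_superset hM (hcard.trans_le ht) (hedge i j hij) hsub hK
  · rw [← eq_of_subset_of_card_le hsub (by omega)]
    exact hedge i j hij

theorem LasserreFeasible.sum_singleton_le_indepNum {y : Finset V → ℝ}
    (hy : LasserreFeasible G t y) (hαt : indepNum G ≤ t) : ∑ i, y {i} ≤ indepNum G := by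
  classical
  set z : Finset V → ℝ := fun K => if IsIndepSet G K then y K else 0 with hz
  have hzy : momentMatrix t z = momentMatrix t y := by
    ext A B
    simp only [momentMatrix, hz]
    split_ifs with hAB
    · rfl
    · exact (hy.eq_zero_of_not_isIndepSet ((card_union_le _ _).trans (by omega)) hAB).symm
  obtain ⟨-, hy_empty, -, hM⟩ := hy
  have hsupp : ∀ K, t < #K → z K = 0 := fun K hK =>
    if_neg fun hK' => (hK'.card_le_indepNum.trans hαt).not_gt hK
  have hindep : ∀ K, mobius z K ≠ 0 → IsIndepSet G K := fun K hK => by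
    by_contra hKG
    exact hK (mobius_eq_zero_of_superset fun L hL => if_neg fun hLG => hKG (hLG.mono hL))
  calc ∑ i, y {i} = ∑ i, z {i} := by simp [hz, isIndepSet_singleton]
    _ = ∑ K, mobius z K * #K := (sum_mobius_mul_card z).symm
    _ ≤ ∑ K, mobius z K * indepNum G := sum_le_sum fun K _ => by
      by_cases hK : mobius z K = 0
      · simp [hK]
      · exact mul_le_mul_of_nonneg_left (mod_cast (hindep K hK).card_le_indepNum)
          (mobius_nonneg hsupp (hzy ▸ hM) K)
    _ = indepNum G := by
      rw [← sum_mul, sum_mobius]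
      simp [hz, isIndepSet_empty, hy_empty]

end Lasserre

theorem lasserreBound_eq_indepNum_general {V : Type*} [DecidableEq V] [Fintype V]
    (G : SimpleGraph V) (t : ℕ) (hαt : indepNum G ≤ t) :
    lasserreBound G t = (indepNum G : ℝ) := by
  obtain ⟨I, hI, hIcard⟩ := exists_isIndepSet_card_eq_indepNum G
  refine IsGreatest.csSup_eq ⟨⟨charVec I, hI.lasserreFeasible_charVec t, ?_⟩, ?_⟩
  · rw [sum_charVec_singleton, hIcard]
  · rintro r ⟨y, hy, rfl⟩
    exact hy.sum_singleton_le_indepNum hαt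

/-- **Exactness of the Lasserre hierarchy**: for every graph `G` on `n` vertices and every
integer `t` with `α(G) ≤ t ≤ n`, the Lasserre bound of order `t` is exact:
`las_t(G) = α(G)`. -/
theorem lasserreBound_eq_indepNum {V : Type*} [DecidableEq V] [Fintype V]
    (G : SimpleGraph V) (t : ℕ) (hαt : indepNum G ≤ t) (htn : t ≤ Fintype.card V) :
    lasserreBound G t = (indepNum G : ℝ) :=
  lasserreBound_eq_indepNum_general G t hαt
end

section
/- The first step of the Lasserre hierarchy coincides with the modified Lovász theta number: for every finite simple graph G = (V, E), las_1(G) = ϑ'(G). -/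
/-- The modified Lovász theta number `ϑ'(G)`. -/
noncomputable def thetaPrime {V : Type*} [Fintype V] (G : SimpleGraph V) : ℝ :=
  sSup {r : ℝ | ∃ X : Matrix V V ℝ, X.PosSemidef ∧ (∀ i j : V, 0 ≤ X i j) ∧
    X.trace = 1 ∧ (∀ i j : V, G.Adj i j → X i j = 0) ∧ r = ∑ i : V, ∑ j : V, X i j}

/-!
When `y ∅ = 1`, the order-one moment matrix of `y`, indexed by `∅` and the singletons, is the
bordered matrix `[[1, yᵀ], [y, Y]]` with `Y i j = y {i, j}`, so `y {i} = Y i i`. If it is positive semidefinite,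
so is `Y`, and testing it against `(-s, 1, …, 1)`, where `s = ∑ y {i}`, gives `∑ Y ≥ s²`; hence
`Y / s` is feasible for `ϑ'` with value at least `s`.

Conversely, let `X` be feasible for `ϑ'` with `s = ∑ X`, and rescale it to
`Y = diag(a) X diag(a)` with `aᵢ = cᵢ / (√s X i i)`, `cᵢ` the `i`-th column sum. Then the bordered
matrix of `Y` is `Pᵀ X P`, where `P` has the columns `𝟙 / √s` and `aᵢ eᵢ`, so it is positive
semidefinite, and its value is `∑ aᵢ² X i i = ∑ cᵢ² / (s X i i) ≥ s` by Sedrakyan's inequality,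
because `∑ cᵢ = s` and `∑ X i i = 1`. Both optimal values are therefore suprema of mutually
dominating sets of nonnegative reals.
-/

open Matrix Finset

lemma Real.sSup_le_sSup_of_forall_pos_exists_le {S T : Set ℝ} (hT : BddAbove T)
    (hT₀ : ∀ t ∈ T, 0 ≤ t) (h : ∀ s ∈ S, 0 < s → ∃ t ∈ T, s ≤ t) : sSup S ≤ sSup T := by
  refine Real.sSup_le (fun s hs => ?_) (Real.sSup_nonneg hT₀)
  rcases le_or_gt s 0 with hs₀ | hs₀
  · exact hs₀.trans (Real.sSup_nonneg hT₀)
  · obtain ⟨t, ht, hst⟩ := h s hs hs₀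
    exact hst.trans (le_csSup hT ht)

lemma Real.bddAbove_of_forall_pos_exists_le {S T : Set ℝ} (hS : BddAbove S)
    (h : ∀ t ∈ T, 0 < t → ∃ s ∈ S, t ≤ s) : BddAbove T := by
  obtain ⟨b, hb⟩ := hS
  refine ⟨max b 0, fun t ht => ?_⟩
  rcases le_or_gt t 0 with ht₀ | ht₀
  · exact ht₀.trans (le_max_right b 0)
  · obtain ⟨s, hs, hts⟩ := h t ht ht₀
    exact hts.trans ((hb hs).trans (le_max_left b 0))

lemma Finset.sq_sum_div_le_sum_sq_div_of_nonneg {ι : Type*} (s : Finset ι) (f : ι → ℝ)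
    {g : ι → ℝ} (hg : ∀ i ∈ s, 0 ≤ g i) (hfg : ∀ i ∈ s, g i = 0 → f i = 0) :
    (∑ i ∈ s, f i) ^ 2 / ∑ i ∈ s, g i ≤ ∑ i ∈ s, f i ^ 2 / g i := by
  classical
  have hf : ∑ i ∈ s with g i ≠ 0, f i = ∑ i ∈ s, f i :=
    sum_filter_of_ne fun i hi hfi => mt (hfg i hi) hfi
  have hg' : ∑ i ∈ s with g i ≠ 0, g i = ∑ i ∈ s, g i := sum_filter_ne_zero s
  have hfg' : ∑ i ∈ s with g i ≠ 0, f i ^ 2 / g i = ∑ i ∈ s, f i ^ 2 / g i :=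
    sum_filter_of_ne fun i _ h hgi => h (by rw [hgi, div_zero])
  rw [← hf, ← hg', ← hfg']
  refine sq_sum_div_le_sum_sq_div _ f fun i hi => ?_
  rw [mem_filter] at hi
  exact (hg i hi.1).lt_of_ne' hi.2

lemma Matrix.PosSemidef.apply_eq_zero_of_diag_eq_zero_s6 {n : Type*} [Fintype n] [DecidableEq n]
    {A : Matrix n n ℝ} (hA : A.PosSemidef) {i : n} (hi : A i i = 0) (j : n) : A j i = 0 := by
  have h := (hA.dotProduct_mulVec_zero_iff (Pi.single i 1)).mp (by simp [hi])
  simpa using congrFun h j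

section

variable {V : Type*} [DecidableEq V]

noncomputable def Option.equivFinsetCardLeOne : Option V ≃ {J : Finset V // J.card ≤ 1} :=
  Equiv.ofBijective (fun o => ⟨o.toFinset, by cases o <;> simp⟩) <| by
    refine ⟨fun o o' h => ?_, fun ⟨J, hJ⟩ => ?_⟩
    · cases o <;> cases o' <;> simp_all [Subtype.ext_iff, eq_comm]
    · rcases Nat.le_one_iff_eq_zero_or_eq_one.mp hJ with h | h
      · exact ⟨none, by simp [Finset.card_eq_zero.mp h]⟩
      · obtain ⟨i, rfl⟩ := Finset.card_eq_one.mp h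
        exact ⟨some i, rfl⟩

def momentMatrixOne (y : Finset V → ℝ) : Matrix (Option V) (Option V) ℝ :=
  fun o o' => y (o.toFinset ∪ o'.toFinset)

lemma posSemidef_momentMatrix_one_iff (y : Finset V → ℝ) :
    (momentMatrix 1 y).PosSemidef ↔ (momentMatrixOne y).PosSemidef :=
  (posSemidef_submatrix_equiv Option.equivFinsetCardLeOne).symm

variable [Fintype V]

lemma momentMatrixOne_quadratic_nonneg {y : Finset V → ℝ} (hy : (momentMatrixOne y).PosSemidef)
    (c : ℝ) (v : V → ℝ) :
    0 ≤ c ^ 2 * y ∅ + 2 * c * ∑ i, v i * y {i} + ∑ i, ∑ j, v i * v j * y {i, j} := by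
  have h := hy.dotProduct_mulVec_nonneg (fun o => o.elim c v)
  simp only [star_trivial, dotProduct, mulVec, Fintype.sum_option, momentMatrixOne,
    Option.elim, Option.toFinset_none, Option.toFinset_some, empty_union, union_empty,
    ← insert_eq] at h
  have e₁ : ∑ i, y {i} * v i = ∑ i, v i * y {i} := sum_congr rfl fun _ _ => mul_comm _ _
  have e₂ : ∑ i, v i * (y {i} * c) = c * ∑ i, v i * y {i} := by
    rw [mul_sum]; exact sum_congr rfl fun _ _ => by ring
  have e₃ : ∑ i, v i * ∑ j, y {i, j} * v j = ∑ i, ∑ j, v i * v j * y {i, j} :=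
    sum_congr rfl fun _ _ => by rw [mul_sum]; exact sum_congr rfl fun _ _ => by ring
  simp only [mul_add, sum_add_distrib, e₁, e₂, e₃] at h
  linarith

variable {y : Finset V → ℝ}

lemma le_one_of_posSemidef_momentMatrixOne (hy : (momentMatrixOne y).PosSemidef) (hy₀ : y ∅ = 1)
    (i : V) : y {i} ≤ 1 := by
  have h := momentMatrixOne_quadratic_nonneg hy 1 (Pi.single i (-1))
  simp [Pi.single_apply, hy₀] at h
  linarith

lemma sq_sum_le_sum_sum_of_posSemidef_momentMatrixOne (hy : (momentMatrixOne y).PosSemidef)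
    (hy₀ : y ∅ = 1) : (∑ i, y {i}) ^ 2 ≤ ∑ i, ∑ j, y {i, j} := by
  have h := momentMatrixOne_quadratic_nonneg hy (-∑ i, y {i}) 1
  simp only [Pi.one_apply, one_mul, hy₀] at h
  linarith

end

section

variable {V : Type*} [DecidableEq V]

noncomputable def pairMomentVec (Y : Matrix V V ℝ) (J : Finset V) : ℝ :=
  if J = ∅ then 1
  else if J.card = 1 then ∑ i ∈ J, Y i i
  else (∑ i ∈ J, ∑ j ∈ J.erase i, Y i j) / 2

lemma pairMomentVec_empty (Y : Matrix V V ℝ) : pairMomentVec Y ∅ = 1 := if_pos rfl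

lemma pairMomentVec_singleton (Y : Matrix V V ℝ) (i : V) : pairMomentVec Y {i} = Y i i := by
  simp [pairMomentVec]

lemma pairMomentVec_pair {Y : Matrix V V ℝ} (hY : Y.IsSymm) (i j : V) :
    pairMomentVec Y {i, j} = Y i j := by
  rcases eq_or_ne i j with rfl | hij
  · simp [pairMomentVec]
  · simp [pairMomentVec, card_pair hij, hij, hij.symm, hY.apply i j]

lemma pairMomentVec_nonneg {Y : Matrix V V ℝ} (hY : ∀ i j, 0 ≤ Y i j) (J : Finset V) :
    0 ≤ pairMomentVec Y J := by
  unfold pairMomentVec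
  split_ifs
  · exact zero_le_one
  · exact sum_nonneg fun i _ => hY i i
  · exact div_nonneg (sum_nonneg fun i _ => sum_nonneg fun j _ => hY i j) zero_le_two

end

section

variable {V : Type*} [Fintype V]

def ThetaPrimeFeasible (G : SimpleGraph V) (X : Matrix V V ℝ) : Prop :=
  X.PosSemidef ∧ (∀ i j, 0 ≤ X i j) ∧ X.trace = 1 ∧ ∀ i j, G.Adj i j → X i j = 0

lemma thetaPrime_eq_sSup (G : SimpleGraph V) :
    thetaPrime G = sSup {r | ∃ X, ThetaPrimeFeasible G X ∧ r = ∑ i, ∑ j, X i j} := by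
  simp only [thetaPrime, ThetaPrimeFeasible, and_assoc]

variable [DecidableEq V] {G : SimpleGraph V} {y : Finset V → ℝ}

lemma sum_le_card_of_lasserreFeasible (hy : LasserreFeasible G 1 y) :
    ∑ i, y {i} ≤ Fintype.card V := by
  obtain ⟨-, hy₀, -, hM⟩ := hy
  rw [posSemidef_momentMatrix_one_iff] at hM
  exact (sum_le_sum fun i _ => le_one_of_posSemidef_momentMatrixOne hM hy₀ i).trans_eq (by simp)

lemma exists_thetaPrimeFeasible_le (hy : LasserreFeasible G 1 y) (hs : 0 < ∑ i, y {i}) :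
    ∃ X, ThetaPrimeFeasible G X ∧ ∑ i, y {i} ≤ ∑ i, ∑ j, X i j := by
  obtain ⟨hnn, hy₀, hedge, hM⟩ := hy
  rw [posSemidef_momentMatrix_one_iff] at hM
  set s := ∑ i, y {i}
  have hX : of (fun i j => s⁻¹ * y {i, j}) = s⁻¹ • (momentMatrixOne y).submatrix some some := by
    ext i j
    simp only [of_apply, Matrix.smul_apply, submatrix_apply, momentMatrixOne,
      Option.toFinset_some, smul_eq_mul, ← insert_eq]
  refine ⟨of fun i j => s⁻¹ * y {i, j}, ⟨hX ▸ (hM.submatrix some).smul (inv_nonneg.mpr hs.le),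
    fun i j => ?_, ?_, fun i j hij => ?_⟩, ?_⟩
  · exact mul_nonneg (inv_nonneg.mpr hs.le) (hnn _ card_le_two)
  · simp only [trace, diag_apply, of_apply, ← mul_sum, insert_eq_self.mpr (mem_singleton_self _)]
    exact inv_mul_cancel₀ hs.ne'
  · rw [of_apply, hedge i j hij, mul_zero]
  · simp only [of_apply, ← mul_sum]
    rw [le_inv_mul_iff₀ hs, ← sq]
    exact sq_sum_le_sum_sum_of_posSemidef_momentMatrixOne hM hy₀

end

section

variable {V : Type*} [Fintype V] (X : Matrix V V ℝ)

/-- This is `0` when `X i i = 0`, which is harmless: the `i`-th column of a positive semidefinite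
`X` then vanishes. -/
noncomputable def thetaWeight (i : V) : ℝ :=
  (∑ k, X k i) / (√(∑ k, ∑ l, X k l) * X i i)

variable {X}

lemma thetaWeight_nonneg (hX : ∀ i j, 0 ≤ X i j) (i : V) : 0 ≤ thetaWeight X i :=
  div_nonneg (sum_nonneg fun k _ => hX k i) (mul_nonneg (Real.sqrt_nonneg _) (hX i i))

lemma thetaWeight_mul_thetaWeight_mul_diag (i : V) :
    thetaWeight X i * thetaWeight X i * X i i =
      thetaWeight X i * (∑ k, X k i) / √(∑ k, ∑ l, X k l) := by
  by_cases hi : X i i = 0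
  · simp [thetaWeight, hi]
  · by_cases hs : √(∑ k, ∑ l, X k l) = 0
    · simp [thetaWeight, hs]
    · unfold thetaWeight
      field_simp

lemma thetaWeight_mul_thetaWeight_mul_diag_eq_div (hs : 0 ≤ ∑ k, ∑ l, X k l) (i : V) :
    thetaWeight X i * thetaWeight X i * X i i =
      (∑ k, X k i) ^ 2 / ((∑ k, ∑ l, X k l) * X i i) := by
  by_cases hi : X i i = 0
  · simp [thetaWeight, hi]
  · unfold thetaWeight
    rw [div_mul_div_comm, mul_mul_mul_comm, Real.mul_self_sqrt hs]
    field_simp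

end

section

variable {V : Type*} [DecidableEq V] [Fintype V] (X : Matrix V V ℝ)

noncomputable def lasserreVecOfTheta : Finset V → ℝ :=
  pairMomentVec (of fun i j => thetaWeight X i * thetaWeight X j * X i j)

noncomputable def thetaLift : Matrix V (Option V) ℝ :=
  of fun k o => o.elim (√(∑ k, ∑ l, X k l))⁻¹ fun i => diagonal (thetaWeight X) k i

variable {X}

lemma lasserreVecOfTheta_empty : lasserreVecOfTheta X ∅ = 1 :=
  pairMomentVec_empty _

lemma lasserreVecOfTheta_singleton (i : V) :
    lasserreVecOfTheta X {i} = thetaWeight X i * thetaWeight X i * X i i := by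
  rw [lasserreVecOfTheta, pairMomentVec_singleton, of_apply]

lemma lasserreVecOfTheta_pair (hX : X.IsSymm) (i j : V) :
    lasserreVecOfTheta X {i, j} = thetaWeight X i * thetaWeight X j * X i j := by
  refine (pairMomentVec_pair ?_ i j).trans (of_apply _ i j)
  ext i j
  simp only [transpose_apply, of_apply, hX.apply i j, mul_comm]

lemma momentMatrixOne_lasserreVecOfTheta (hX : X.IsSymm) (hs : 0 < ∑ k, ∑ l, X k l) :
    momentMatrixOne (lasserreVecOfTheta X) = (thetaLift X)ᵀ * X * thetaLift X := by
  ext (_ | i) (_ | j) <;>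
    simp only [momentMatrixOne, thetaLift, Option.toFinset_none, Option.toFinset_some,
      union_idempotent, empty_union, union_empty, singleton_union, lasserreVecOfTheta_empty,
      lasserreVecOfTheta_singleton, lasserreVecOfTheta_pair hX, mul_apply, transpose_apply,
      of_apply, diagonal_apply, Option.elim_none, Option.elim_some, mul_ite, ite_mul, mul_zero,
      zero_mul, sum_ite_eq', mem_univ, if_true, ← mul_sum, ← sum_mul]
  · rw [sum_comm, mul_right_comm, ← mul_inv, ← sq, Real.sq_sqrt hs.le, inv_mul_cancel₀ hs.ne']
  · rw [thetaWeight_mul_thetaWeight_mul_diag]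
    ring
  · rw [thetaWeight_mul_thetaWeight_mul_diag, sum_congr rfl fun l _ => hX.apply l i]
    ring
  · ring

variable {G : SimpleGraph V}

lemma lasserreFeasible_lasserreVecOfTheta (hX : ThetaPrimeFeasible G X)
    (hs : 0 < ∑ k, ∑ l, X k l) : LasserreFeasible G 1 (lasserreVecOfTheta X) := by
  obtain ⟨hpsd, hnn, -, hedge⟩ := hX
  have hsymm : X.IsSymm := isHermitian_iff_isSymm.mp hpsd.isHermitian
  refine ⟨fun J _ => pairMomentVec_nonneg (fun i j => ?_) J, lasserreVecOfTheta_empty,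
    fun i j hij => ?_, ?_⟩
  · exact mul_nonneg (mul_nonneg (thetaWeight_nonneg hnn i) (thetaWeight_nonneg hnn j)) (hnn i j)
  · rw [lasserreVecOfTheta_pair hsymm, hedge i j hij, mul_zero]
  · rw [posSemidef_momentMatrix_one_iff, momentMatrixOne_lasserreVecOfTheta hsymm hs]
    simpa using hpsd.conjTranspose_mul_mul_same (thetaLift X)

lemma sum_le_sum_lasserreVecOfTheta (hX : ThetaPrimeFeasible G X) (hs : 0 < ∑ k, ∑ l, X k l) :
    ∑ k, ∑ l, X k l ≤ ∑ i, lasserreVecOfTheta X {i} := by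
  obtain ⟨hpsd, hnn, htr, -⟩ := hX
  set s := ∑ k, ∑ l, X k l
  have hcol : ∑ i, ∑ k, X k i = s := sum_comm
  have sedrakyan := sq_sum_div_le_sum_sq_div_of_nonneg univ (fun i => ∑ k, X k i)
    (fun i _ => hnn i i) fun i _ hi =>
      sum_eq_zero fun k _ => hpsd.apply_eq_zero_of_diag_eq_zero_s6 hi k
  rw [hcol, show ∑ i, X i i = 1 from htr, div_one] at sedrakyan
  calc s = s⁻¹ * s ^ 2 := by field_simp
    _ ≤ s⁻¹ * ∑ i, (∑ k, X k i) ^ 2 / X i i := by gcongr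
    _ = ∑ i, lasserreVecOfTheta X {i} := by
      rw [mul_sum]
      refine sum_congr rfl fun i _ => ?_
      rw [lasserreVecOfTheta_singleton, thetaWeight_mul_thetaWeight_mul_diag_eq_div hs.le,
        mul_div_assoc', inv_mul_eq_div, div_div]

end

/-- **The first step of the Lasserre hierarchy coincides with the modified Lovász theta
number**: for every finite simple graph `G`, `las_1(G) = ϑ'(G)`. -/
theorem lasserreBound_one_eq_thetaPrime {V : Type*} [DecidableEq V] [Fintype V]
    (G : SimpleGraph V) :
    lasserreBound G 1 = thetaPrime G := by
  set L := {r | ∃ y, LasserreFeasible G 1 y ∧ r = ∑ i, y {i}}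
  set T := {r | ∃ X, ThetaPrimeFeasible G X ∧ r = ∑ i, ∑ j, X i j}
  have hL : BddAbove L := ⟨Fintype.card V, by
    rintro _ ⟨y, hy, rfl⟩; exact sum_le_card_of_lasserreFeasible hy⟩
  have hTL : ∀ t ∈ T, 0 < t → ∃ r ∈ L, t ≤ r := by
    rintro _ ⟨X, hX, rfl⟩ hs
    exact ⟨_, ⟨_, lasserreFeasible_lasserreVecOfTheta hX hs, rfl⟩,
      sum_le_sum_lasserreVecOfTheta hX hs⟩
  have hLT : ∀ r ∈ L, 0 < r → ∃ t ∈ T, r ≤ t := by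
    rintro _ ⟨y, hy, rfl⟩ hs
    obtain ⟨X, hX, hle⟩ := exists_thetaPrimeFeasible_le hy hs
    exact ⟨_, ⟨X, hX, rfl⟩, hle⟩
  have hL₀ : ∀ r ∈ L, 0 ≤ r := by
    rintro _ ⟨y, hy, rfl⟩; exact sum_nonneg fun i _ => hy.1 {i} (by simp)
  have hT₀ : ∀ t ∈ T, 0 ≤ t := by
    rintro _ ⟨X, hX, rfl⟩; exact sum_nonneg fun i _ => sum_nonneg fun j _ => hX.2.1 i j
  rw [lasserreBound, thetaPrime_eq_sSup]
  exact le_antisymm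
    (Real.sSup_le_sSup_of_forall_pos_exists_le (Real.bddAbove_of_forall_pos_exists_le hL hTL) hT₀
      hLT)
    (Real.sSup_le_sSup_of_forall_pos_exists_le hL hL₀ hTL)
end

section
/- Cone characterization of full moment matrices: let V be a finite set with n = |V| elements and let y ∈ ℝ^{P_n(V)} be a vector indexed by the full power set of V. Then the moment matrix M_n(y) is positive semidefinite if and only if y lies in the finitely generated cone generated by the characteristic vectors, i.e., if and only if there exist nonnegative real numbers α_I, I ⊆ V, such that y = ∑_{I ⊆ V} α_I χ^I. -/
/-!
Let `Z` be the matrix with rows `χ^I`. The identity `χ^I_{J ∪ K} = χ^I_J χ^I_K` gives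
`M_n(αᵀ Z) = Zᵀ diag(α) Z`, and `Z` is unitriangular with respect to cardinality, hence
invertible. So every `y` is `αᵀ Z` for a unique `α`, and `M_n(y)` is positive semidefinite
exactly when `diag(α)` is, i.e. when `α ≥ 0`.
-/

open Matrix

namespace MomentMatrix

variable {V : Type*} [DecidableEq V]

variable (V) in
def charMatrix : Matrix (Finset V) (Finset V) ℝ :=
  Matrix.of fun I J => charVec I J

theorem charVec_union (I J K : Finset V) :
    charVec I (J ∪ K) = charVec I J * charVec I K := by
  by_cases hJ : J ⊆ I <;> by_cases hK : K ⊆ I <;> simp [charVec, hJ, hK, Finset.union_subset_iff]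

theorem charMatrix_blockTriangular :
    (charMatrix V).BlockTriangular fun I => OrderDual.toDual I.card := fun I J hIJ => by
  have : ¬ J ⊆ I := fun h => (Finset.card_le_card h).not_gt hIJ
  simp [charMatrix, charVec, this]

variable [Fintype V]

theorem det_charMatrix : (charMatrix V).det = 1 := by
  rw [charMatrix_blockTriangular.det]
  refine Finset.prod_eq_one fun k _ => ?_
  suffices (charMatrix V).toSquareBlock (fun I => OrderDual.toDual I.card) k = 1 by
    rw [this, det_one]
  ext ⟨I, hI⟩ ⟨J, hJ⟩
  have hcard : I.card ≤ J.card := (OrderDual.toDual.injective (hI.trans hJ.symm)).le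
  simp only [toSquareBlock_def, charMatrix, charVec, of_apply, one_apply, Subtype.mk.injEq]
  exact if_congr ⟨fun h => (Finset.eq_of_subset_of_card_le h hcard).symm, fun h => h ▸ subset_rfl⟩
    rfl rfl

theorem isUnit_charMatrix : IsUnit (charMatrix V) :=
  (isUnit_iff_isUnit_det _).2 (by simp [det_charMatrix])

/-- Every subset of `V` has at most `|V|` elements, so `M_{|V|}` is indexed by all of them. -/
def subsetsEquiv : Finset V ≃ {J : Finset V // J.card ≤ Fintype.card V} :=
  (Equiv.subtypeUnivEquiv Finset.card_le_univ).symm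

theorem momentMatrix_submatrix_subsetsEquiv (α : Finset V → ℝ) :
    (momentMatrix (Fintype.card V) (α ᵥ* charMatrix V)).submatrix subsetsEquiv subsetsEquiv =
      star (charMatrix V) * diagonal α * charMatrix V := by
  ext J K
  rw [mul_apply]
  simp only [submatrix_apply, momentMatrix, subsetsEquiv, Equiv.subtypeUnivEquiv_symm_apply,
    vecMul, dotProduct, star_eq_conjTranspose, conjTranspose_eq_transpose_of_trivial,
    mul_diagonal, transpose_apply, charMatrix, of_apply, charVec_union]
  exact Finset.sum_congr rfl fun I _ => by ring

theorem posSemidef_momentMatrix_iff (α : Finset V → ℝ) :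
    (momentMatrix (Fintype.card V) (α ᵥ* charMatrix V)).PosSemidef ↔ ∀ I, 0 ≤ α I := by
  rw [← posSemidef_submatrix_equiv subsetsEquiv, momentMatrix_submatrix_subsetsEquiv,
    isUnit_charMatrix.posSemidef_star_left_conjugate_iff, posSemidef_diagonal_iff]

end MomentMatrix

open MomentMatrix in
/-- **Cone characterization of full moment matrices**: for a finite set `V` with `n = |V|`
and a vector `y` indexed by the full power set of `V`, the moment matrix `M_n(y)` is positive
semidefinite if and only if `y` is a nonnegative combination of the characteristic vectors
`χ^I`, `I ⊆ V`. -/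
theorem momentMatrix_posSemidef_iff_mem_cone {V : Type*} [DecidableEq V] [Fintype V]
    (y : Finset V → ℝ) :
    (momentMatrix (Fintype.card V) y).PosSemidef ↔
    ∃ α : Finset V → ℝ, (∀ I : Finset V, 0 ≤ α I) ∧
      y = fun J => ∑ I : Finset V, α I * charVec I J := by
  -- `fun J => ∑ I, α I * charVec I J` is `α ᵥ* charMatrix V` by unfolding.
  constructor
  · intro hy
    have hy_eq : y = (y ᵥ* (charMatrix V)⁻¹) ᵥ* charMatrix V := by
      rw [vecMul_vecMul, nonsing_inv_mul _ (by simp [det_charMatrix]),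
        vecMul_one]
    rw [hy_eq, posSemidef_momentMatrix_iff] at hy
    exact ⟨_, hy, hy_eq⟩
  · rintro ⟨α, hα, rfl⟩
    exact (posSemidef_momentMatrix_iff α).2 hα
end

section
/- Dimension of the Terwilliger algebra of the binary Hamming scheme: for every n ≥ 1, the complex vector space 𝒜_n of matrices X ∈ ℂ^{𝔽₂ⁿ × 𝔽₂ⁿ} that are invariant under all simultaneous coordinate permutations (X_{σ·x, σ·y} = X_{x,y} for every permutation σ of the n coordinates and all x, y ∈ 𝔽₂ⁿ) has dimension C(n+3, 3); a basis is given by the 0–1 matrices B^t_{i,j}, indexed by the integer triples (i,j,t) with 0 ≤ t ≤ min(i,j) and i + j ≤ n + t, where (B^t_{i,j})_{x,y} = 1 if and only if wt_H(x) = i, wt_H(y) = j, and d_H(x,y) = i + j − 2t. -/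
/-- The Terwilliger algebra `𝒜_n` of the binary Hamming scheme: the space of complex
matrices indexed by `𝔽₂ⁿ × 𝔽₂ⁿ` which are invariant under all simultaneous permutations of
the `n` coordinates. -/
noncomputable def terwilligerAlgebra (n : ℕ) :
    Submodule ℂ (Matrix (Fin n → ZMod 2) (Fin n → ZMod 2) ℂ) where
  carrier := {X | ∀ (σ : Equiv.Perm (Fin n)) (x y : Fin n → ZMod 2),
    X (x ∘ σ) (y ∘ σ) = X x y}
  add_mem' := by
    intro X Y hX hY σ x y
    simp only [Matrix.add_apply, hX σ x y, hY σ x y]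
  zero_mem' := by
    intro σ x y
    simp
  smul_mem' := by
    intro c X hX σ x y
    simp only [Matrix.smul_apply, hX σ x y]

/-- The 0–1 matrix `B^t_{i,j}`: `(B^t_{i,j})_{x,y} = 1` iff `wt_H(x) = i`, `wt_H(y) = j` and
`d_H(x,y) = i + j - 2t`. -/
def terwilligerBasisMatrix (n i j t : ℕ) :
    Matrix (Fin n → ZMod 2) (Fin n → ZMod 2) ℂ :=
  fun x y =>
    if hammingNorm x = i ∧ hammingNorm y = j ∧ hammingDist x y = i + j - 2 * t then 1 else 0

/-- The index set of the triples `(i, j, t)` with `t ≤ i`, `t ≤ j` and `i + j ≤ n + t`. -/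
def TerwilligerIndex (n : ℕ) : Type :=
  {p : ℕ × ℕ × ℕ // p.2.2 ≤ p.1 ∧ p.2.2 ≤ p.2.1 ∧ p.1 + p.2.1 ≤ n + p.2.2}

/-!
The symmetric group acts on pairs `(x, y)` coordinatewise, so a pair is determined up to
permutation by how many coordinates `k` carry each of the four patterns
`(x k, y k) ∈ 𝔽₂ × 𝔽₂`: two maps `Fin n → 𝔽₂ × 𝔽₂` with the same fibre sizes differ by a
permutation, and every choice of fibre sizes summing to `n` is realised. For the patterns
`(1,0), (0,1), (1,1), (0,0)` these sizes are `i - t, j - t, t, n + t - i - j`, where `i = wt x`,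
`j = wt y` and `t = |supp x ∩ supp y|`, and `B^t_{i,j}` is the indicator of the corresponding
orbit. Hence invariant matrices are exactly the functions of `(i, j, t)`, the `B^t_{i,j}` are the
images of the standard basis under this injective correspondence, and their number is the number
of weak compositions of `n` into four parts, `C(n+3, 3)` by stars and bars.
-/

open Finset

section FiberCard

variable {ι γ : Type*} [Fintype ι] [DecidableEq γ]

def fiberCard (u : ι → γ) (c : γ) : ℕ := #{k | u k = c}

theorem sum_fiberCard [Fintype γ] (u : ι → γ) : ∑ c, fiberCard u c = Fintype.card ι := by
  simpa [fiberCard] using (card_eq_sum_card_fiberwise (f := u) (s := univ) (t := univ)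
    (fun _ _ => mem_coe.2 (mem_univ _))).symm

theorem fiberCard_comp_perm (u : ι → γ) (σ : Equiv.Perm ι) :
    fiberCard (u ∘ σ) = fiberCard u := by
  funext c
  simp only [fiberCard, card_filter]
  exact Equiv.sum_comp σ (fun k => if u k = c then 1 else 0)

theorem exists_perm_comp_eq_of_fiberCard_eq {u v : ι → γ} (h : fiberCard u = fiberCard v) :
    ∃ σ : Equiv.Perm ι, u ∘ σ = v := by
  have e : ∀ c, {k // v k = c} ≃ {k // u k = c} := fun c =>
    Fintype.equivOfCardEq <| by
      rw [Fintype.card_subtype, Fintype.card_subtype]; exact congrFun h.symm c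
  exact ⟨Equiv.ofFiberEquiv e, funext (Equiv.ofFiberEquiv_map e)⟩

theorem exists_fiberCard_eq [Fintype γ] (N : γ → ℕ) (hN : ∑ c, N c = Fintype.card ι) :
    ∃ u : ι → γ, fiberCard u = N := by
  let e : ι ≃ Σ c, Fin (N c) := Fintype.equivOfCardEq (by simp [hN])
  refine ⟨fun k => (e k).1, funext fun c => ?_⟩
  rw [fiberCard, ← Fintype.card_subtype, ← Fintype.card_fin (N c)]
  exact Fintype.card_congr ((e.subtypeEquiv fun _ => Iff.rfl).trans (Equiv.sigmaSubtype c))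

theorem hammingNorm_comp_eq_sum {β : Type*} [Fintype γ] [Zero β] [DecidableEq β]
    (u : ι → γ) (f : γ → β) :
    hammingNorm (f ∘ u) = ∑ c, if f c ≠ 0 then fiberCard u c else 0 := by
  simp only [hammingNorm, card_filter, Function.comp_apply]
  rw [← sum_fiberwise' univ u (fun c => if f c ≠ 0 then 1 else 0)]
  simp [fiberCard]

end FiberCard

theorem sum_zmodTwo_prod {M : Type*} [AddCommMonoid M] (g : ZMod 2 × ZMod 2 → M) :
    ∑ c, g c = g (0, 0) + g (0, 1) + g (1, 0) + g (1, 1) := by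
  have sum_two (f : ZMod 2 → M) : ∑ a, f a = f 0 + f 1 := Fin.sum_univ_two f
  simp only [Fintype.sum_prod_type, sum_two, add_assoc]

section PairCount

variable {ι : Type*} [Fintype ι] (x y : ι → ZMod 2)

def pairCount : ZMod 2 × ZMod 2 → ℕ := fiberCard fun k => (x k, y k)

theorem hammingNorm_left_eq_pairCount :
    hammingNorm x = pairCount x y (1, 0) + pairCount x y (1, 1) := by
  simpa [pairCount, sum_zmodTwo_prod, Function.comp_def] using
    hammingNorm_comp_eq_sum (fun k => (x k, y k)) Prod.fst

theorem hammingNorm_right_eq_pairCount :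
    hammingNorm y = pairCount x y (0, 1) + pairCount x y (1, 1) := by
  simpa [pairCount, sum_zmodTwo_prod, Function.comp_def] using
    hammingNorm_comp_eq_sum (fun k => (x k, y k)) Prod.snd

theorem hammingDist_eq_pairCount :
    hammingDist x y = pairCount x y (0, 1) + pairCount x y (1, 0) := by
  rw [hammingDist_eq_hammingNorm, pairCount]
  refine (hammingNorm_comp_eq_sum (fun k => (x k, y k)) fun c => -c.1 + c.2).trans ?_
  simp [sum_zmodTwo_prod, CharTwo.add_self_eq_zero]

theorem sum_pairCount : pairCount x y (0, 0) + pairCount x y (0, 1) + pairCount x y (1, 0) +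
    pairCount x y (1, 1) = Fintype.card ι := by
  rw [← sum_zmodTwo_prod]; exact sum_fiberCard _

end PairCount

theorem zmodTwo_prod_cases (c : ZMod 2 × ZMod 2) :
    c = (0, 0) ∨ c = (0, 1) ∨ c = (1, 0) ∨ c = (1, 1) := by
  revert c; decide

section Index

variable {n : ℕ}

instance : DecidableEq (TerwilligerIndex n) := by
  unfold TerwilligerIndex; infer_instance

def terwilligerIndexEquiv (n : ℕ) :
    TerwilligerIndex n ≃ {N : ZMod 2 × ZMod 2 → ℕ // ∑ c, N c = n} where
  toFun p := ⟨fun c => if c = (1, 1) then p.1.2.2 else if c = (1, 0) then p.1.1 - p.1.2.2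
      else if c = (0, 1) then p.1.2.1 - p.1.2.2 else n + p.1.2.2 - p.1.1 - p.1.2.1, by
    obtain ⟨⟨i, j, t⟩, hti, htj, hij⟩ := p
    dsimp only at hti htj hij
    simp [sum_zmodTwo_prod]; omega⟩
  invFun N := ⟨(N.1 (1, 0) + N.1 (1, 1), N.1 (0, 1) + N.1 (1, 1), N.1 (1, 1)), by
    obtain ⟨N, hN⟩ := N; rw [sum_zmodTwo_prod] at hN; dsimp only; omega⟩
  left_inv := by
    rintro ⟨⟨i, j, t⟩, hti, htj, hij⟩
    dsimp only at hti htj hij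
    apply Subtype.ext
    simp; omega
  right_inv := by
    rintro ⟨N, hN⟩
    rw [sum_zmodTwo_prod] at hN
    ext c
    rcases zmodTwo_prod_cases c with rfl | rfl | rfl | rfl <;> simp
    omega

theorem coe_terwilligerIndexEquiv_apply (p : TerwilligerIndex n) :
    (terwilligerIndexEquiv n p : ZMod 2 × ZMod 2 → ℕ) = fun c =>
      if c = (1, 1) then p.1.2.2 else if c = (1, 0) then p.1.1 - p.1.2.2
      else if c = (0, 1) then p.1.2.1 - p.1.2.2 else n + p.1.2.2 - p.1.1 - p.1.2.1 :=
  rfl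

noncomputable def terwilligerIndexEquivSym (n : ℕ) :
    TerwilligerIndex n ≃ Sym (ZMod 2 × ZMod 2) n :=
  (terwilligerIndexEquiv n).trans (Sym.equivNatSumOfFintype _ n).symm

noncomputable instance : Fintype (TerwilligerIndex n) :=
  Fintype.ofEquiv _ (terwilligerIndexEquivSym n).symm

theorem card_terwilligerIndex : Fintype.card (TerwilligerIndex n) = (n + 3).choose 3 := by
  rw [Fintype.card_congr (terwilligerIndexEquivSym n), Sym.card_sym_eq_choose]
  simp [add_comm 3 n, ← Nat.choose_symm_add]

end Index

section Profile

variable {n : ℕ}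

def terwilligerProfile (x y : Fin n → ZMod 2) : TerwilligerIndex n :=
  (terwilligerIndexEquiv n).symm
    ⟨pairCount x y, (sum_fiberCard fun k => (x k, y k)).trans (Fintype.card_fin n)⟩

theorem terwilligerProfile_eq_iff {x y : Fin n → ZMod 2} {p : TerwilligerIndex n} :
    terwilligerProfile x y = p ↔ pairCount x y = terwilligerIndexEquiv n p := by
  rw [terwilligerProfile, Equiv.symm_apply_eq, Subtype.ext_iff]

theorem terwilligerProfile_comp_perm (x y : Fin n → ZMod 2) (σ : Equiv.Perm (Fin n)) :
    terwilligerProfile (x ∘ σ) (y ∘ σ) = terwilligerProfile x y := by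
  simp only [terwilligerProfile, pairCount]
  congr 2
  exact fiberCard_comp_perm (fun k => (x k, y k)) σ

theorem exists_perm_of_terwilligerProfile_eq {x y x' y' : Fin n → ZMod 2}
    (h : terwilligerProfile x y = terwilligerProfile x' y') :
    ∃ σ : Equiv.Perm (Fin n), x ∘ σ = x' ∧ y ∘ σ = y' := by
  have hcount : fiberCard (fun k => (x k, y k)) = fiberCard fun k => (x' k, y' k) :=
    congrArg Subtype.val ((terwilligerIndexEquiv n).symm.injective h)
  obtain ⟨σ, hσ⟩ := exists_perm_comp_eq_of_fiberCard_eq hcount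
  exact ⟨σ, funext fun k => congrArg Prod.fst (congrFun hσ k),
    funext fun k => congrArg Prod.snd (congrFun hσ k)⟩

theorem terwilligerProfile_surjective :
    Function.Surjective fun xy : (Fin n → ZMod 2) × (Fin n → ZMod 2) =>
      terwilligerProfile xy.1 xy.2 := by
  intro p
  obtain ⟨u, hu⟩ := exists_fiberCard_eq (ι := Fin n) (terwilligerIndexEquiv n p).1
    (by simpa using (terwilligerIndexEquiv n p).2)
  exact ⟨(fun k => (u k).1, fun k => (u k).2), terwilligerProfile_eq_iff.2 hu⟩

theorem terwilligerProfile_eq_iff_hamming {x y : Fin n → ZMod 2} {p : TerwilligerIndex n} :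
    terwilligerProfile x y = p ↔ hammingNorm x = p.1.1 ∧ hammingNorm y = p.1.2.1 ∧
      hammingDist x y = p.1.1 + p.1.2.1 - 2 * p.1.2.2 := by
  have htotal := sum_pairCount x y
  rw [terwilligerProfile_eq_iff, hammingNorm_left_eq_pairCount x y,
    hammingNorm_right_eq_pairCount x y, hammingDist_eq_pairCount, funext_iff,
    coe_terwilligerIndexEquiv_apply]
  obtain ⟨⟨i, j, t⟩, hti, htj, hij⟩ := p
  dsimp only at hti htj hij ⊢
  simp only [Fintype.card_fin] at htotal
  constructor
  · intro h
    have h00 := h (0, 0); have h01 := h (0, 1); have h10 := h (1, 0); have h11 := h (1, 1)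
    simp at h00 h01 h10 h11
    omega
  · rintro ⟨hi, hj, hd⟩ c
    rcases zmodTwo_prod_cases c with rfl | rfl | rfl | rfl <;> simp <;> omega

theorem terwilligerBasisMatrix_apply (p : TerwilligerIndex n) (x y : Fin n → ZMod 2) :
    terwilligerBasisMatrix n p.1.1 p.1.2.1 p.1.2.2 x y =
      if terwilligerProfile x y = p then 1 else 0 :=
  if_congr terwilligerProfile_eq_iff_hamming.symm rfl rfl

end Profile

section Lift

variable {n : ℕ}

noncomputable def terwilligerLift (n : ℕ) :
    (TerwilligerIndex n → ℂ) →ₗ[ℂ] Matrix (Fin n → ZMod 2) (Fin n → ZMod 2) ℂ where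
  toFun c := Matrix.of fun x y => c (terwilligerProfile x y)
  map_add' _ _ := rfl
  map_smul' _ _ := rfl

theorem terwilligerLift_apply (c : TerwilligerIndex n → ℂ) (x y : Fin n → ZMod 2) :
    terwilligerLift n c x y = c (terwilligerProfile x y) :=
  rfl

theorem terwilligerLift_injective : Function.Injective (terwilligerLift n) := by
  intro c c' h
  funext p
  obtain ⟨⟨x, y⟩, rfl⟩ := terwilligerProfile_surjective p
  exact congrFun (congrFun h x) y

theorem range_terwilligerLift : LinearMap.range (terwilligerLift n) = terwilligerAlgebra n := by
  apply le_antisymm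
  · rintro _ ⟨c, rfl⟩ σ x y
    simp only [terwilligerLift_apply, terwilligerProfile_comp_perm]
  · intro X hX
    choose rep hrep using terwilligerProfile_surjective (n := n)
    refine ⟨fun p => X (rep p).1 (rep p).2, ?_⟩
    ext x y
    obtain ⟨σ, hx, hy⟩ := exists_perm_of_terwilligerProfile_eq (hrep (terwilligerProfile x y))
    rw [terwilligerLift_apply, ← hX σ, hx, hy]

theorem terwilligerLift_single (p : TerwilligerIndex n) :
    terwilligerLift n (Pi.single p 1) = terwilligerBasisMatrix n p.1.1 p.1.2.1 p.1.2.2 := by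
  ext x y
  rw [terwilligerLift_apply, terwilligerBasisMatrix_apply, Pi.single_apply]

end Lift

theorem terwilligerAlgebra_finrank_and_basis_general (n : ℕ) :
    Module.finrank ℂ (terwilligerAlgebra n) = (n + 3).choose 3 ∧
    (∀ p : TerwilligerIndex n,
      terwilligerBasisMatrix n p.1.1 p.1.2.1 p.1.2.2 ∈ terwilligerAlgebra n) ∧
    LinearIndependent ℂ
      (fun p : TerwilligerIndex n => terwilligerBasisMatrix n p.1.1 p.1.2.1 p.1.2.2) ∧
    Submodule.span ℂ
      (Set.range fun p : TerwilligerIndex n =>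
        terwilligerBasisMatrix n p.1.1 p.1.2.1 p.1.2.2) = terwilligerAlgebra n := by
  have hB : (fun p : TerwilligerIndex n => terwilligerBasisMatrix n p.1.1 p.1.2.1 p.1.2.2) =
      terwilligerLift n ∘ Pi.basisFun ℂ (TerwilligerIndex n) := by
    funext p
    rw [Function.comp_apply, Pi.basisFun_apply, terwilligerLift_single]
  have hind : LinearIndependent ℂ
      (fun p : TerwilligerIndex n => terwilligerBasisMatrix n p.1.1 p.1.2.1 p.1.2.2) :=
    hB ▸ (Pi.basisFun ℂ _).linearIndependent.map' _
      (LinearMap.ker_eq_bot.2 terwilligerLift_injective)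
  have hspan : Submodule.span ℂ (Set.range fun p : TerwilligerIndex n =>
      terwilligerBasisMatrix n p.1.1 p.1.2.1 p.1.2.2) = terwilligerAlgebra n := by
    rw [hB, Set.range_comp, Submodule.span_image, Module.Basis.span_eq, Submodule.map_top,
      range_terwilligerLift]
  refine ⟨?_, fun p => hspan ▸ Submodule.subset_span ⟨p, rfl⟩, hind, hspan⟩
  rw [← hspan, finrank_span_eq_card hind, card_terwilligerIndex]

/-- **Dimension and basis of the Terwilliger algebra of the binary Hamming scheme**: for
every `n ≥ 1`, the algebra `𝒜_n` has dimension `C(n+3, 3)`, and the matrices `B^t_{i,j}`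
indexed by the triples `(i,j,t)` with `0 ≤ t ≤ min(i,j)` and `i + j ≤ n + t` form a basis:
they lie in `𝒜_n`, are linearly independent, and span `𝒜_n`. -/
theorem terwilligerAlgebra_finrank_and_basis (n : ℕ) (hn : 1 ≤ n) :
    Module.finrank ℂ (terwilligerAlgebra n) = (n + 3).choose 3 ∧
    (∀ p : TerwilligerIndex n,
      terwilligerBasisMatrix n p.1.1 p.1.2.1 p.1.2.2 ∈ terwilligerAlgebra n) ∧
    LinearIndependent ℂ
      (fun p : TerwilligerIndex n => terwilligerBasisMatrix n p.1.1 p.1.2.1 p.1.2.2) ∧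
    Submodule.span ℂ
      (Set.range fun p : TerwilligerIndex n =>
        terwilligerBasisMatrix n p.1.1 p.1.2.1 p.1.2.2) = terwilligerAlgebra n :=
  terwilligerAlgebra_finrank_and_basis_general n
end
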